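/- arXiv:1610.09879 — 4 statements merged into one kernel-verified Lean document; each statement's English description precedes it below -/
import Mathlib

section
/- Let M_p be a positive sequence with M_0 = 1 satisfying (M.1): M_p^2 ≤ M_{p-1}·M_{p+1} for all p ≥ 1, and (M.2)': M_{p+1} ≤ A·H^p·M_p for some A, H > 1 and all p. Let M(t) = sup_{p∈ℕ} log(t^p / M_p) for t > 0, with M(0)=0. Then for every η > 0 and all t > 0, t^η · exp(−M(H^η t)) ≤ A^η · exp(−M(t)). -/
/-! Iterating (M.2)' gives `M (p + n) ≤ A ^ n * H ^ (n * p + C(n, 2)) * M p` for every integer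
shift `n`. For real `η > 0` put `n = ⌈η⌉₊` and `θ = η / n ∈ (0, 1]`. The geometric mean, with
weights `1 - θ` and `θ`, of the terms of indices `p` and `p + n` in the supremum defining
`exp (M (H ^ η * t))` has the shape `(H ^ η * t) ^ (p + η) / (M p * (M (p + n) / M p) ^ θ)`,
and it dominates `A ^ (-η) * t ^ η * t ^ p / M p` because the surplus factor `H ^ (η ^ 2)`
absorbs `H ^ (θ * C(n, 2)) = H ^ (η * (n - 1) / 2)`. So one of those two terms dominates it,
and taking the supremum over `p` gives the inequality. -/

/-- `assocExp M t = exp(M(t))` where `M(t) = sup_p log(t^p/M_p)` is the associated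
function of the weight sequence `M`; valued in `ℝ≥0∞` to allow `M(t) = ∞`. -/
noncomputable def assocExp (M : ℕ → ℝ) (t : ℝ) : ENNReal :=
  ⨆ p : ℕ, ENNReal.ofReal (t ^ p / M p)

open Real

lemma le_or_le_of_le_convex_comb {x a b θ : ℝ} (hθ₀ : 0 ≤ θ) (hθ₁ : θ ≤ 1)
    (h : x ≤ (1 - θ) * a + θ * b) : x ≤ a ∨ x ≤ b := by
  have hmax : (1 - θ) * a + θ * b ≤ max a b := by
    nlinarith [mul_le_mul_of_nonneg_left (le_max_left a b) (sub_nonneg.2 hθ₁),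
      mul_le_mul_of_nonneg_left (le_max_right a b) hθ₀]
  exact le_max_iff.mp (h.trans hmax)

lemma log_rpow_mul_pow_div {c s m : ℝ} (hc : 0 < c) (hs : 0 < s) (hm : 0 < m) (η : ℝ) (q : ℕ) :
    log (c ^ η * (s ^ q / m)) = η * log c + q * log s - log m := by
  rw [log_mul (by positivity) (by positivity), log_div (by positivity) hm.ne', log_pow,
    log_rpow hc]
  ring

section WeightSequence

variable {M : ℕ → ℝ} {A H : ℝ}

lemma weight_add_le (hA : 0 ≤ A) (hH : 0 ≤ H) (hM2 : ∀ p : ℕ, M (p + 1) ≤ A * H ^ p * M p)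
    (n p : ℕ) : M (p + n) ≤ A ^ n * H ^ (n * p + n.choose 2) * M p := by
  induction n with
  | zero => simp
  | succ n ih =>
    calc M (p + (n + 1)) ≤ A * H ^ (p + n) * M (p + n) := hM2 (p + n)
      _ ≤ A * H ^ (p + n) * (A ^ n * H ^ (n * p + n.choose 2) * M p) := by gcongr
      _ = A ^ (n + 1) * H ^ ((n + 1) * p + (n + 1).choose 2) * M p := by
        rw [Nat.choose_succ_succ, Nat.choose_one_right]
        ring

lemma log_weight_add_sub_le (hM : ∀ p, 0 < M p) (hA : 0 < A) (hH : 0 < H)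
    (hM2 : ∀ p : ℕ, M (p + 1) ≤ A * H ^ p * M p) (n p : ℕ) :
    log (M (p + n)) - log (M p) ≤ n * log A + (n * p + n.choose 2 : ℕ) * log H := by
  have h := log_le_log (hM _) (weight_add_le hA.le hH.le hM2 n p)
  rw [log_mul (by positivity) (hM p).ne', log_mul (by positivity) (by positivity),
    log_pow, log_pow] at h
  linarith

lemma exists_rpow_mul_pow_div_le (hM : ∀ p, 0 < M p) (hA : 0 < A) (hH : 1 ≤ H)
    (hM2 : ∀ p : ℕ, M (p + 1) ≤ A * H ^ p * M p) {η t : ℝ} (hη : 0 < η) (ht : 0 < t)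
    (p : ℕ) : ∃ q : ℕ, t ^ η * (t ^ p / M p) ≤ A ^ η * ((H ^ η * t) ^ q / M q) := by
  set n := ⌈η⌉₊
  set θ := η / n
  have hn : (0 : ℝ) < n := by exact_mod_cast Nat.ceil_pos.mpr hη
  have hθn : θ * n = η := div_mul_cancel₀ η hn.ne'
  have hθ₀ : 0 ≤ θ := by positivity
  have hθ₁ : θ ≤ 1 := (div_le_one hn).mpr (Nat.le_ceil η)
  have hchoose : θ * (n.choose 2 : ℝ) ≤ η * η := by
    have hn₁ : (n : ℝ) < η + 1 := Nat.ceil_lt_add_one hη.le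
    rw [Nat.cast_choose_two]
    nlinarith
  have hH₀ : 0 < H := one_pos.trans_le hH
  have hlogH : 0 ≤ log H := log_nonneg hH
  have hs : 0 < H ^ η * t := by positivity
  have hlogs : log (H ^ η * t) = η * log H + log t := by
    rw [log_mul (by positivity) ht.ne', log_rpow hH₀]
  have hlhs : 0 < t ^ η * (t ^ p / M p) := by
    have := hM p
    positivity
  have hterm : ∀ q, 0 < A ^ η * ((H ^ η * t) ^ q / M q) := fun q => by
    have := hM q
    positivity
  have hΔ := mul_le_mul_of_nonneg_left (log_weight_add_sub_le hM hA hH₀ hM2 n p) hθ₀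
  suffices h : log (t ^ η * (t ^ p / M p)) ≤
      (1 - θ) * log (A ^ η * ((H ^ η * t) ^ p / M p)) +
        θ * log (A ^ η * ((H ^ η * t) ^ (p + n) / M (p + n))) by
    rcases le_or_le_of_le_convex_comb hθ₀ hθ₁ h with h | h
    · exact ⟨p, (log_le_log_iff hlhs (hterm _)).mp h⟩
    · exact ⟨p + n, (log_le_log_iff hlhs (hterm _)).mp h⟩
  simp only [log_rpow_mul_pow_div ht ht (hM _), log_rpow_mul_pow_div hA hs (hM _), hlogs]
  push_cast at hΔ ⊢
  clear_value θ
  linear_combination hΔ + mul_le_mul_of_nonneg_right hchoose hlogH +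
    (log A + p * log H - η * log H - log t) * hθn

end WeightSequence

theorem stmt4_general (M : ℕ → ℝ) (hMpos : ∀ p, 0 < M p)
    (A H : ℝ) (hA : 1 < A) (hH : 1 < H)
    (hM2 : ∀ p : ℕ, M (p + 1) ≤ A * H ^ p * M p)
    (η t : ℝ) (hη : 0 < η) (ht : 0 < t) :
    ENNReal.ofReal (t ^ η) * assocExp M t ≤
      ENNReal.ofReal (A ^ η) * assocExp M (H ^ η * t) := by
  rw [assocExp, ENNReal.mul_iSup]
  refine iSup_le fun p => ?_
  obtain ⟨q, hq⟩ := exists_rpow_mul_pow_div_le hMpos (one_pos.trans hA) hH.le hM2 hη ht p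
  calc ENNReal.ofReal (t ^ η) * ENNReal.ofReal (t ^ p / M p)
      = ENNReal.ofReal (t ^ η * (t ^ p / M p)) := (ENNReal.ofReal_mul (by positivity)).symm
    _ ≤ ENNReal.ofReal (A ^ η * ((H ^ η * t) ^ q / M q)) := ENNReal.ofReal_le_ofReal hq
    _ = ENNReal.ofReal (A ^ η) * ENNReal.ofReal ((H ^ η * t) ^ q / M q) :=
      ENNReal.ofReal_mul (by positivity)
    _ ≤ ENNReal.ofReal (A ^ η) * assocExp M (H ^ η * t) := by
      gcongr
      exact le_iSup (fun q => ENNReal.ofReal ((H ^ η * t) ^ q / M q)) q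

/-- If the weight sequence `M_p` (positive, `M_0 = 1`) satisfies
(M.1) `M_p² ≤ M_{p-1}M_{p+1}` and (M.2)' `M_{p+1} ≤ A·H^p·M_p` with `A, H > 1`, then
for every `η > 0` and all `t > 0`, `t^η · e^{−M(H^η t)} ≤ A^η · e^{−M(t)}`;
equivalently (in exponential form) `t^η · e^{M(t)} ≤ A^η · e^{M(H^η t)}`. -/
theorem stmt4 (M : ℕ → ℝ) (hMpos : ∀ p, 0 < M p) (hM0 : M 0 = 1)
    (hM1 : ∀ p : ℕ, 1 ≤ p → (M p) ^ 2 ≤ M (p - 1) * M (p + 1))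
    (A H : ℝ) (hA : 1 < A) (hH : 1 < H)
    (hM2 : ∀ p : ℕ, M (p + 1) ≤ A * H ^ p * M p)
    (η t : ℝ) (hη : 0 < η) (ht : 0 < t) :
    ENNReal.ofReal (t ^ η) * assocExp M t ≤
      ENNReal.ofReal (A ^ η) * assocExp M (H ^ η * t) :=
  stmt4_general M hMpos A H hA hH hM2 η t hη ht
end

section
/- For every solid harmonic Q_j of degree j on ℝ^n (n ≥ 2) and every nonzero multi-index α, the supremum of |∂^α Q_j| on the unit sphere satisfies ‖∂^α Q_j‖_{L^∞(S^{n-1})} ≤ e^{n/4−1/2}·√n · 2^{|α|/2} · j^{|α|+n/2−1} · ‖Q_j‖_{L^∞(S^{n-1})}. -/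
/-!
On the great circle through a unit vector `x` in a unit direction `v ⊥ x`, a homogeneous `Q` of
degree `m` reads `Q (Re z • x + Im z • v) = z⁻ᵐ P(z)` for `|z| = 1`, where `P` is a polynomial of
degree at most `2m`, and `m P(1) - P'(1) = i ∂_v Q(x)`.
M. Riesz's interpolation formula writes `4m (m P(1) - P'(1))` as a combination of the values of `P`
at the `2m` roots of `z^{2m} = -1` with positive weights of total `4m²`; this is Bernstein's
inequality `|∂_v Q(x)| ≤ m ‖Q‖`. By Euler's identity the radial derivative is `m Q(x)`, so
`|∂_i Q| ≤ √2 m ‖Q‖` on the sphere. Iterating along `α`, the degree only drops, which gives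
`‖∂^α Q‖ ≤ (√2 j)^{|α|} ‖Q‖`; the remaining factors of the claimed bound are at least `1`.
-/

open MvPolynomial

/-- The iterated partial derivative `∂^α` of multi-index `α` acting on polynomials. -/
noncomputable def pderivMulti (n : ℕ) (α : Fin n → ℕ) :
    MvPolynomial (Fin n) ℝ →ₗ[ℝ] MvPolynomial (Fin n) ℝ :=
  ((List.finRange n).map fun i => ((MvPolynomial.pderiv (R := ℝ) i).toLinearMap ^ (α i))).prod

/-- The sup of `|Q|` over the unit sphere `S^{n-1}`. -/
noncomputable def supSphere (n : ℕ) (Q : MvPolynomial (Fin n) ℝ) : ℝ :=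
  ⨆ x : Metric.sphere (0 : EuclideanSpace ℝ (Fin n)) 1,
    |MvPolynomial.eval (fun i => (x : EuclideanSpace ℝ (Fin n)) i) Q|

lemma Complex.ofReal_four_div_norm_one_sub_sq {u : ℂ} (hu : ‖u‖ = 1) (hu1 : u ≠ 1) :
    ((4 / ‖1 - u‖ ^ 2 : ℝ) : ℂ) = -4 * u / (1 - u) ^ 2 := by
  have hconj : (starRingEnd ℂ) u = u⁻¹ := by
    rw [Complex.inv_def, Complex.normSq_eq_norm_sq, hu]; simp
  have hnorm : ((‖1 - u‖ ^ 2 : ℝ) : ℂ) = (1 - u) * (1 - u⁻¹) := by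
    rw [← Complex.normSq_eq_norm_sq, ← Complex.mul_conj, map_sub, map_one, hconj]
  have hu0 : u ≠ 0 := by rintro rfl; simp at hu
  have h1u : 1 - u ≠ 0 := sub_ne_zero.mpr hu1.symm
  push_cast at hnorm ⊢
  rw [hnorm]
  field_simp
  ring

section Riesz

open Complex Polynomial Finset

noncomputable def rieszNode (m k : ℕ) : ℂ := exp (Real.pi * I / (2 * m)) ^ (2 * k + 1)

variable {m : ℕ}

lemma rieszNode_pow_two_mul (hm : m ≠ 0) (k : ℕ) : rieszNode m k ^ (2 * m) = -1 := by
  have h : exp (Real.pi * I / (2 * m)) ^ (2 * m) = -1 := by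
    rw [← exp_nat_mul, ← exp_pi_mul_I]
    congr 1
    push_cast
    field_simp
  rw [rieszNode, ← pow_mul, mul_comm (2 * k + 1), pow_mul, h, Odd.neg_one_pow ⟨k, rfl⟩]

lemma norm_rieszNode (hm : m ≠ 0) (k : ℕ) : ‖rieszNode m k‖ = 1 := by
  have h := congrArg norm (rieszNode_pow_two_mul hm k)
  rw [norm_pow, norm_neg, norm_one] at h
  exact (pow_eq_one_iff_of_nonneg (norm_nonneg _) (by omega)).mp h

lemma rieszNode_ne_one (hm : m ≠ 0) (k : ℕ) : rieszNode m k ≠ 1 := by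
  intro h
  have := rieszNode_pow_two_mul hm k
  rw [h, one_pow] at this
  norm_num at this

lemma sum_rieszNode_pow_eq_zero (hm : m ≠ 0) {r : ℕ} (hr : ¬ 2 * m ∣ r) :
    ∑ k ∈ range (2 * m), rieszNode m k ^ r = 0 := by
  set ω := exp (Real.pi * I / (2 * m))
  have hζ : IsPrimitiveRoot (ω ^ 2) (2 * m) := by
    convert isPrimitiveRoot_exp (2 * m) (by omega) using 1
    rw [← exp_nat_mul]
    push_cast
    ring_nf
  have hne : (ω ^ 2) ^ r ≠ 1 := fun h => hr (hζ.pow_eq_one_iff_dvd r |>.mp h)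
  have hterm : ∀ k, rieszNode m k ^ r = ω ^ r * ((ω ^ 2) ^ r) ^ k := fun k => by
    rw [rieszNode]; ring
  rw [sum_congr rfl fun k _ => hterm k, ← mul_sum, geom_sum_eq hne, ← pow_mul, mul_comm r,
    pow_mul, hζ.pow_eq_one, one_pow, sub_self, zero_div, mul_zero]

lemma one_sub_rieszNode_mul_geom_sum (hm : m ≠ 0) (k : ℕ) :
    (1 - rieszNode m k) * ∑ r ∈ range (2 * m), rieszNode m k ^ r = 2 := by
  rw [mul_comm, geom_sum_mul_neg, rieszNode_pow_two_mul hm]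
  ring

lemma sum_inv_one_sub_rieszNode (hm : m ≠ 0) :
    ∑ k ∈ range (2 * m), (1 - rieszNode m k)⁻¹ = m := by
  have h : ∀ k, (1 - rieszNode m k)⁻¹ = (∑ r ∈ range (2 * m), rieszNode m k ^ r) / 2 :=
    fun k => inv_eq_of_mul_eq_one_right <| by
      rw [mul_div_assoc', one_sub_rieszNode_mul_geom_sum hm, div_self two_ne_zero]
  simp_rw [h, ← sum_div]
  rw [sum_comm, sum_eq_single_of_mem 0 (by simp; omega)]
  · simp
  · intro r hr hr0
    exact sum_rieszNode_pow_eq_zero hm fun h => hr0 (Nat.eq_zero_of_dvd_of_lt h (by simpa using hr))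

lemma sum_rieszNode_pow_div_one_sub (hm : m ≠ 0) {c : ℕ} (hc : c ≤ 4 * m) :
    ∑ k ∈ range (2 * m), rieszNode m k ^ c / (1 - rieszNode m k) =
      if c = 0 ∨ 2 * m < c then (m : ℂ) else -m := by
  induction c with
  | zero => simpa [div_eq_mul_inv] using sum_inv_one_sub_rieszNode hm
  | succ c ih =>
    have hstep : ∀ k, rieszNode m k ^ (c + 1) / (1 - rieszNode m k) =
        rieszNode m k ^ c / (1 - rieszNode m k) - rieszNode m k ^ c := fun k => by
      have := sub_ne_zero.mpr (rieszNode_ne_one hm k).symm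
      field_simp
      ring
    simp_rw [hstep]
    rw [sum_sub_distrib, ih (by omega)]
    rcases Nat.eq_zero_or_pos c with rfl | hc0
    · simp [hm]; ring
    rcases eq_or_ne c (2 * m) with rfl | hc2
    · simp [rieszNode_pow_two_mul hm, hm]; ring
    have hdvd : ¬ 2 * m ∣ c := by
      rintro ⟨q, hq⟩
      have : q < 2 := by nlinarith
      interval_cases q <;> omega
    rw [sum_rieszNode_pow_eq_zero hm hdvd, sub_zero]
    simp only [show c + 1 = 0 ∨ 2 * m < c + 1 ↔ c = 0 ∨ 2 * m < c by omega]

lemma sum_rieszNode_pow_div_one_sub_sq (hm : m ≠ 0) {s : ℕ} (hs : s ≤ 2 * m) :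
    ∑ k ∈ range (2 * m), rieszNode m k ^ (s + 1) / (1 - rieszNode m k) ^ 2 = (m : ℂ) * (s - m) := by
  have hsplit : ∀ k, rieszNode m k ^ (s + 1) / (1 - rieszNode m k) ^ 2 =
      (∑ r ∈ range (2 * m), rieszNode m k ^ (s + 1 + r) / (1 - rieszNode m k)) / 2 := by
    intro k
    have hgeom := one_sub_rieszNode_mul_geom_sum hm k
    have := sub_ne_zero.mpr (rieszNode_ne_one hm k).symm
    have hfactor : ∑ r ∈ range (2 * m), rieszNode m k ^ (s + 1 + r) / (1 - rieszNode m k) =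
        rieszNode m k ^ (s + 1) / (1 - rieszNode m k) * ∑ r ∈ range (2 * m), rieszNode m k ^ r := by
      rw [mul_sum]
      exact sum_congr rfl fun r _ => by ring
    rw [hfactor]
    field_simp
    linear_combination -rieszNode m k ^ (s + 1) * hgeom
  rw [sum_congr rfl fun k _ => hsplit k, ← sum_div, sum_comm,
    sum_congr rfl fun r hr => sum_rieszNode_pow_div_one_sub hm (c := s + 1 + r)
      (by simp at hr; omega), show 2 * m = (2 * m - s) + s by omega, sum_range_add]
  rw [sum_congr rfl fun r hr => if_neg (by simp at hr; omega),
    sum_congr rfl fun r hr => if_pos (Or.inr (by omega))]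
  simp only [sum_const, card_range, nsmul_eq_mul]
  push_cast [hs]
  ring

noncomputable def rieszWeight (m k : ℕ) : ℝ := 4 / ‖1 - rieszNode m k‖ ^ 2

lemma sum_rieszWeight_mul_pow (hm : m ≠ 0) {s : ℕ} (hs : s ≤ 2 * m) :
    ∑ k ∈ range (2 * m), (rieszWeight m k : ℂ) * rieszNode m k ^ s = 4 * m * (m - s) := by
  have h : ∀ k, (rieszWeight m k : ℂ) * rieszNode m k ^ s =
      -4 * (rieszNode m k ^ (s + 1) / (1 - rieszNode m k) ^ 2) := fun k => by
    rw [rieszWeight,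
      Complex.ofReal_four_div_norm_one_sub_sq (norm_rieszNode hm k) (rieszNode_ne_one hm k)]
    ring
  rw [sum_congr rfl fun k _ => h k, ← mul_sum, sum_rieszNode_pow_div_one_sub_sq hm hs]
  ring

/-- M. Riesz's interpolation formula. -/
lemma sum_rieszWeight_mul_eval (hm : m ≠ 0) {P : ℂ[X]} (hP : P.natDegree ≤ 2 * m) :
    ∑ k ∈ range (2 * m), (rieszWeight m k : ℂ) * P.eval (rieszNode m k) =
      4 * m * (m * P.eval 1 - P.derivative.eval 1) := by
  have hP' : P.natDegree < 2 * m + 1 := by omega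
  conv_lhs => rw [P.as_sum_range' _ hP']
  conv_rhs => rw [P.as_sum_range' _ hP']
  simp only [eval_finsetSum, derivative_sum, Polynomial.eval_monomial, derivative_monomial,
    one_pow, mul_one, mul_sum]
  rw [sum_comm, ← sum_sub_distrib, mul_sum]
  refine sum_congr rfl fun s hs => ?_
  simp_rw [mul_left_comm _ (P.coeff s)]
  rw [← mul_sum, sum_rieszWeight_mul_pow hm (by simpa [Nat.lt_succ_iff] using hs)]
  ring

theorem Polynomial.norm_mul_eval_one_sub_derivative_eval_one_le {m : ℕ} {P : ℂ[X]}
    (hP : P.natDegree ≤ 2 * m) {M : ℝ} (hM : ∀ z : ℂ, ‖z‖ = 1 → ‖P.eval z‖ ≤ M) :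
    ‖m * P.eval 1 - P.derivative.eval 1‖ ≤ m * M := by
  rcases eq_or_ne m 0 with rfl | hm
  · simp [derivative_of_natDegree_zero (Nat.le_zero.mp hP)]
  have hweights : ∑ k ∈ range (2 * m), rieszWeight m k = 4 * m * m := by
    have h := sum_rieszWeight_mul_eval hm (P := 1) (by simp)
    simp only [eval_one, mul_one, derivative_one, eval_zero, sub_zero] at h
    exact_mod_cast h
  have hbound : 4 * m * ‖m * P.eval 1 - P.derivative.eval 1‖ ≤ 4 * m * (m * M) := by
    calc 4 * m * ‖m * P.eval 1 - P.derivative.eval 1‖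
        = ‖∑ k ∈ range (2 * m), (rieszWeight m k : ℂ) * P.eval (rieszNode m k)‖ := by
          rw [sum_rieszWeight_mul_eval hm hP, norm_mul]; norm_cast
      _ ≤ ∑ k ∈ range (2 * m), rieszWeight m k * M := by
          refine (norm_sum_le _ _).trans (sum_le_sum fun k _ => ?_)
          rw [norm_mul, norm_real, Real.norm_of_nonneg (by unfold rieszWeight; positivity)]
          exact mul_le_mul_of_nonneg_left (hM _ (norm_rieszNode hm k))
            (by unfold rieszWeight; positivity)
      _ = 4 * m * (m * M) := by rw [← sum_mul, hweights]; ring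
  exact le_of_mul_le_mul_left hbound (by positivity)

end Riesz

namespace MvPolynomial

open Finset

section Homogeneous

variable {σ R S : Type*} [CommSemiring R] [CommSemiring S] [Algebra R S] {Q : MvPolynomial σ R}
  {m : ℕ}

lemma IsHomogeneous.aeval_smul (hQ : Q.IsHomogeneous m) (c : S) (y : σ → S) :
    MvPolynomial.aeval (c • y) Q = c ^ m * MvPolynomial.aeval y Q := by
  rw [aeval_def, aeval_def, eval₂_eq, eval₂_eq, mul_sum]
  refine sum_congr rfl fun d hd => ?_
  simp_rw [Pi.smul_apply, smul_eq_mul, mul_pow]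
  rw [prod_mul_distrib, prod_pow_eq_pow_sum, ← hQ.degree_eq_sum_deg_support hd]
  ring

lemma IsHomogeneous.sum_mul_eval_pderiv [Fintype σ] (hQ : Q.IsHomogeneous m) (x : σ → R) :
    ∑ i, x i * eval x (pderiv i Q) = m * eval x Q := by
  simpa using congrArg (eval x) hQ.sum_X_mul_pderiv

end Homogeneous

open Polynomial in
lemma natDegree_aeval_le {σ R S : Type*} [CommSemiring R] [CommSemiring S] [Algebra R S]
    (Q : MvPolynomial σ R) {g : σ → S[X]} {e : ℕ} (hg : ∀ i, (g i).natDegree ≤ e) :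
    (aeval g Q).natDegree ≤ e * Q.totalDegree := by
  rw [aeval_def, eval₂_eq]
  refine natDegree_sum_le_of_forall_le _ _ fun d hd => ?_
  refine natDegree_C_mul_le _ _ |>.trans <| natDegree_prod_le _ _ |>.trans ?_
  calc ∑ i ∈ d.support, (g i ^ d i).natDegree ≤ ∑ i ∈ d.support, e * d i :=
        sum_le_sum fun i _ => natDegree_pow_le.trans (by rw [mul_comm]; gcongr; exact hg i)
    _ = e * d.degree := by rw [← mul_sum, Finsupp.degree_apply]
    _ ≤ e * Q.totalDegree := by gcongr; exact le_totalDegree hd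

open Polynomial in
lemma derivative_aeval {σ R S : Type*} [CommSemiring R] [CommSemiring S] [Algebra R S] [Fintype σ]
    (g : σ → S[X]) (Q : MvPolynomial σ R) :
    derivative (aeval g Q) = ∑ i, aeval g (pderiv i Q) * derivative (g i) := by
  classical
  induction Q using MvPolynomial.induction_on with
  | C a => simp
  | add p q hp hq => simp [hp, hq, add_mul, sum_add_distrib]
  | mul_X p i hp =>
    simp only [map_mul, aeval_X, derivative_mul, hp, pderiv_mul, pderiv_X, sum_mul, Pi.single_apply]
    simp [add_mul, sum_add_distrib, mul_right_comm, apply_ite (aeval g)]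

end MvPolynomial

section CirclePoly

lemma Complex.re_sq_add_im_sq_of_norm_eq_one {z : ℂ} (hz : ‖z‖ = 1) : z.re ^ 2 + z.im ^ 2 = 1 := by
  have := Complex.sq_norm z
  rw [hz, Complex.normSq_apply] at this
  linarith

open Complex Finset Polynomial

lemma Polynomial.eval_aeval_mvPolynomial {σ : Type*} (g : σ → Polynomial ℂ)
    (Q : MvPolynomial σ ℝ) (z : ℂ) :
    (MvPolynomial.aeval g Q).eval z = MvPolynomial.aeval (fun i => (g i).eval z) Q := by
  simpa using comp_aeval_apply ((Polynomial.aeval z).restrictScalars ℝ) Q (f := g)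

variable {σ : Type*} {Q : MvPolynomial σ ℝ} {m : ℕ} (x v : σ → ℝ)

noncomputable def circlePoly (Q : MvPolynomial σ ℝ) : Polynomial ℂ :=
  MvPolynomial.aeval (fun i =>
    Polynomial.C ((x i - I * v i) / 2) * Polynomial.X ^ 2 + Polynomial.C ((x i + I * v i) / 2)) Q

lemma natDegree_circlePoly_le (hQ : Q.IsHomogeneous m) : (circlePoly x v Q).natDegree ≤ 2 * m :=
  (natDegree_aeval_le Q (e := 2) fun _ => by compute_degree!).trans
    (by gcongr; exact hQ.totalDegree_le)

lemma eval_circlePoly (hQ : Q.IsHomogeneous m) {z : ℂ} (hz : ‖z‖ = 1) :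
    (circlePoly x v Q).eval z = z ^ m * MvPolynomial.eval (z.re • x + z.im • v) Q := by
  have hnode : ∀ i, (x i - I * v i) / 2 * z ^ 2 + (x i + I * v i) / 2 =
      z * ((z.re * x i + z.im * v i : ℝ) : ℂ) := by
    intro i
    have hab : (z.re : ℂ) ^ 2 + (z.im : ℂ) ^ 2 = 1 := by
      exact_mod_cast Complex.re_sq_add_im_sq_of_norm_eq_one hz
    set a := z.re
    set b := z.im
    rw [← re_add_im z]
    push_cast
    linear_combination
      (-(x i + v i * I) * hab + (b ^ 2 * x i - 2 * a * b * v i - b ^ 2 * v i * I) * I_sq) / 2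
  rw [circlePoly, Polynomial.eval_aeval_mvPolynomial]
  simp only [Polynomial.eval_add, Polynomial.eval_mul, Polynomial.eval_C, Polynomial.eval_pow,
    Polynomial.eval_X, hnode]
  rw [show (fun i => z * ((z.re * x i + z.im * v i : ℝ) : ℂ)) =
      z • (algebraMap ℝ ℂ ∘ (z.re • x + z.im • v)) from rfl, hQ.aeval_smul,
    MvPolynomial.aeval_algebraMap_apply]
  rfl

lemma eval_one_circlePoly : (circlePoly x v Q).eval 1 = MvPolynomial.eval x Q := by
  rw [circlePoly, Polynomial.eval_aeval_mvPolynomial]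
  simp only [Polynomial.eval_add, Polynomial.eval_mul, Polynomial.eval_C, Polynomial.eval_pow,
    Polynomial.eval_X, one_pow, mul_one]
  rw [show (fun i => (x i - I * v i) / 2 + (x i + I * v i) / 2) = algebraMap ℝ ℂ ∘ x from
    funext fun i => by simp; ring, MvPolynomial.aeval_algebraMap_apply]
  rfl

lemma derivative_eval_one_circlePoly [Fintype σ] (hQ : Q.IsHomogeneous m) :
    (derivative (circlePoly x v Q)).eval 1 =
      m * MvPolynomial.eval x Q - I * ∑ i, v i * MvPolynomial.eval x (pderiv i Q) := by
  have hchain : derivative (circlePoly x v Q) = ∑ i, circlePoly x v (pderiv i Q) *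
      derivative (Polynomial.C ((x i - I * v i) / 2) * Polynomial.X ^ 2 +
        Polynomial.C ((x i + I * v i) / 2)) :=
    derivative_aeval _ Q
  have heuler := congrArg (algebraMap ℝ ℂ) (hQ.sum_mul_eval_pderiv x)
  simp only [hchain, Polynomial.eval_finsetSum, Polynomial.eval_mul, eval_one_circlePoly,
    Polynomial.derivative_add, Polynomial.derivative_C_mul_X_pow, Polynomial.derivative_C,
    Polynomial.eval_C, Polynomial.eval_pow, Polynomial.eval_X, one_pow, mul_one, add_zero]
  push_cast at heuler ⊢
  calc _ = ∑ i, (x i : ℂ) * MvPolynomial.eval x (pderiv i Q) -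
        I * ∑ i, (v i : ℂ) * MvPolynomial.eval x (pderiv i Q) := by
        rw [mul_sum, ← sum_sub_distrib]; exact sum_congr rfl fun i _ => by ring
    _ = _ := by linear_combination heuler

end CirclePoly

section SupSphere

variable {n : ℕ} (Q : MvPolynomial (Fin n) ℝ)

lemma supSphere_nonneg : 0 ≤ supSphere n Q :=
  Real.iSup_nonneg fun _ => abs_nonneg _

lemma abs_eval_le_supSphere {x : EuclideanSpace ℝ (Fin n)} (hx : ‖x‖ = 1) :
    |eval x Q| ≤ supSphere n Q := by
  have hcont : Continuous fun y : EuclideanSpace ℝ (Fin n) => |eval y Q| :=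
    ((continuous_eval Q).comp (PiLp.continuous_ofLp 2 _)).abs
  have hbdd := (isCompact_sphere (0 : EuclideanSpace ℝ (Fin n)) 1).bddAbove_image hcont.continuousOn
  rw [Set.image_eq_range] at hbdd
  exact le_ciSup hbdd ⟨x, by simpa using hx⟩

lemma supSphere_le {B : ℝ} (hB : 0 ≤ B)
    (h : ∀ x : EuclideanSpace ℝ (Fin n), ‖x‖ = 1 → |eval x Q| ≤ B) : supSphere n Q ≤ B :=
  Real.iSup_le (fun x => h x (norm_eq_of_mem_sphere x)) hB

end SupSphere

namespace MvPolynomial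

open Finset
open scoped RealInnerProductSpace

variable {n m : ℕ} {Q : MvPolynomial (Fin n) ℝ}

noncomputable def evalGrad (Q : MvPolynomial (Fin n) ℝ) (x : EuclideanSpace ℝ (Fin n)) :
    EuclideanSpace ℝ (Fin n) :=
  WithLp.toLp 2 fun i => eval x (pderiv i Q)

lemma inner_evalGrad (v x : EuclideanSpace ℝ (Fin n)) :
    ⟪v, evalGrad Q x⟫ = ∑ i, v i * eval x (pderiv i Q) := by
  simp [evalGrad, PiLp.inner_apply, mul_comm]

lemma IsHomogeneous.inner_self_evalGrad (hQ : Q.IsHomogeneous m) (x : EuclideanSpace ℝ (Fin n)) :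
    ⟪x, evalGrad Q x⟫ = m * eval x Q := by
  rw [inner_evalGrad, hQ.sum_mul_eval_pderiv]

lemma norm_smul_add_smul_eq_one {E : Type*} [NormedAddCommGroup E] [InnerProductSpace ℝ E]
    {x v : E} (hx : ‖x‖ = 1) (hv : ‖v‖ = 1) (hxv : ⟪x, v⟫ = 0) {a b : ℝ} (hab : a ^ 2 + b ^ 2 = 1) :
    ‖a • x + b • v‖ = 1 := by
  have h : ‖a • x + b • v‖ ^ 2 = 1 := by
    rw [norm_add_sq_real, norm_smul, norm_smul, inner_smul_left, inner_smul_right, hxv, hx, hv]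
    simp [hab]
  exact (pow_eq_one_iff_of_nonneg (norm_nonneg _) two_ne_zero).mp h

lemma IsHomogeneous.abs_inner_evalGrad_le_of_orthonormal (hQ : Q.IsHomogeneous m) {M : ℝ}
    (hM : ∀ y : EuclideanSpace ℝ (Fin n), ‖y‖ = 1 → |eval y Q| ≤ M)
    {x v : EuclideanSpace ℝ (Fin n)} (hx : ‖x‖ = 1) (hv : ‖v‖ = 1) (hxv : ⟪x, v⟫ = 0) :
    |⟪v, evalGrad Q x⟫| ≤ m * M := by
  have hcircle : ∀ z : ℂ, ‖z‖ = 1 → ‖(circlePoly x v Q).eval z‖ ≤ M := by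
    intro z hz
    rw [eval_circlePoly _ _ hQ hz, norm_mul, norm_pow, hz, one_pow, one_mul, Complex.norm_real,
      Real.norm_eq_abs]
    exact hM _ (norm_smul_add_smul_eq_one hx hv hxv (Complex.re_sq_add_im_sq_of_norm_eq_one hz))
  have hbern := Polynomial.norm_mul_eval_one_sub_derivative_eval_one_le
    (natDegree_circlePoly_le x v hQ) hcircle
  rw [eval_one_circlePoly, derivative_eval_one_circlePoly _ _ hQ, sub_sub_cancel, norm_mul,
    Complex.norm_I, one_mul, Complex.norm_real, Real.norm_eq_abs] at hbern
  rwa [inner_evalGrad]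

lemma IsHomogeneous.abs_inner_evalGrad_le (hQ : Q.IsHomogeneous m) {M : ℝ}
    (hM : ∀ y : EuclideanSpace ℝ (Fin n), ‖y‖ = 1 → |eval y Q| ≤ M)
    {x u : EuclideanSpace ℝ (Fin n)} (hx : ‖x‖ = 1) (hxu : ⟪x, u⟫ = 0) :
    |⟪u, evalGrad Q x⟫| ≤ ‖u‖ * (m * M) := by
  rcases eq_or_ne u 0 with rfl | hu
  · simp
  have hnorm : ‖‖u‖⁻¹ • u‖ = 1 := by
    rw [norm_smul, norm_inv, norm_norm, inv_mul_cancel₀ (norm_ne_zero_iff.mpr hu)]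
  have hunit := hQ.abs_inner_evalGrad_le_of_orthonormal hM hx hnorm
    (by rw [real_inner_smul_right, hxu, mul_zero])
  rwa [real_inner_smul_left, abs_mul, abs_inv, abs_norm, inv_mul_le_iff₀
    (norm_pos_iff.mpr hu)] at hunit

lemma IsHomogeneous.abs_eval_pderiv_le (hQ : Q.IsHomogeneous m) {M : ℝ}
    (hM : ∀ y : EuclideanSpace ℝ (Fin n), ‖y‖ = 1 → |eval y Q| ≤ M)
    {x : EuclideanSpace ℝ (Fin n)} (hx : ‖x‖ = 1) (i : Fin n) :
    |eval x (pderiv i Q)| ≤ √2 * (m * M) := by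
  -- `e_i = c • x + u` with `u ⊥ x`: Euler's identity controls the radial part, Bernstein's
  -- inequality the tangential one.
  set e := EuclideanSpace.single i (1 : ℝ)
  set c := ⟪x, e⟫
  set u := e - c • x
  have hxu : ⟪x, u⟫ = 0 := by
    rw [inner_sub_right, inner_smul_right, real_inner_self_eq_norm_sq, hx]; ring
  have hpyth : c ^ 2 + ‖u‖ ^ 2 = 1 := by
    have h := norm_add_sq_real (c • x) u
    rw [add_sub_cancel, show ‖e‖ = 1 by simp [e], inner_smul_left, hxu, norm_smul, hx] at h
    simpa using h.symm
  have hcomp : eval x (pderiv i Q) = c * (m * eval x Q) + ⟪u, evalGrad Q x⟫ := by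
    rw [← hQ.inner_self_evalGrad, ← real_inner_smul_left, ← inner_add_left,
      add_sub_cancel, inner_evalGrad]
    simp [e]
  have hM0 : 0 ≤ m * M := mul_nonneg (Nat.cast_nonneg m) ((abs_nonneg _).trans (hM x hx))
  have hsum : |c| + ‖u‖ ≤ √2 :=
    Real.le_sqrt_of_sq_le (by nlinarith [sq_nonneg (|c| - ‖u‖), sq_abs c])
  calc |eval x (pderiv i Q)| ≤ |c| * (m * M) + ‖u‖ * (m * M) := by
        rw [hcomp]
        refine (abs_add_le _ _).trans (add_le_add ?_ (hQ.abs_inner_evalGrad_le hM hx hxu))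
        rw [abs_mul, abs_mul, Nat.abs_cast]
        exact mul_le_mul_of_nonneg_left (mul_le_mul_of_nonneg_left (hM x hx) (by positivity))
          (abs_nonneg c)
    _ ≤ √2 * (m * M) := by rw [← add_mul]; exact mul_le_mul_of_nonneg_right hsum hM0

lemma IsHomogeneous.supSphere_pderiv_le {n m : ℕ} {Q : MvPolynomial (Fin n) ℝ}
    (hQ : Q.IsHomogeneous m) (i : Fin n) :
    supSphere n (pderiv i Q) ≤ √2 * m * supSphere n Q := by
  rw [mul_assoc]
  exact supSphere_le _ (by have := supSphere_nonneg Q; positivity) fun x hx =>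
    hQ.abs_eval_pderiv_le (fun y hy => abs_eval_le_supSphere Q hy) hx i

end MvPolynomial

section IsBoundedOn

variable {R E : Type*} [Semiring R] [AddCommMonoid E] [Module R E] {H : Set E} {S : E → ℝ}

def Module.End.IsBoundedOn (H : Set E) (S : E → ℝ) (c : ℝ) (T : Module.End R E) : Prop :=
  Set.MapsTo T H H ∧ ∀ x ∈ H, S (T x) ≤ c * S x

namespace Module.End.IsBoundedOn

lemma one : (1 : Module.End R E).IsBoundedOn H S 1 :=
  ⟨Set.mapsTo_id H, fun x _ => by simp⟩

lemma mul {T₁ T₂ : Module.End R E} {c₁ c₂ : ℝ} (h₁ : T₁.IsBoundedOn H S c₁)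
    (h₂ : T₂.IsBoundedOn H S c₂) (hc₁ : 0 ≤ c₁) : (T₁ * T₂).IsBoundedOn H S (c₁ * c₂) :=
  ⟨h₁.1.comp h₂.1, fun x hx => (h₁.2 _ (h₂.1 hx)).trans <| by
    rw [mul_assoc]; exact mul_le_mul_of_nonneg_left (h₂.2 x hx) hc₁⟩

lemma pow {T : Module.End R E} {c : ℝ} (h : T.IsBoundedOn H S c) (hc : 0 ≤ c) (k : ℕ) :
    (T ^ k).IsBoundedOn H S (c ^ k) := by
  induction k with
  | zero => simpa using one
  | succ k ih => simpa only [pow_succ'] using h.mul ih hc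

lemma list_prod {ι : Type*} (L : List ι) {T : ι → Module.End R E} {c : ι → ℝ}
    (hc : ∀ i, 0 ≤ c i) (h : ∀ i, (T i).IsBoundedOn H S (c i)) :
    (L.map T).prod.IsBoundedOn H S (L.map c).prod := by
  induction L with
  | nil => simpa using one
  | cons a L ih => simpa only [List.map_cons, List.prod_cons] using (h a).mul ih (hc a)

end Module.End.IsBoundedOn

end IsBoundedOn

lemma isBoundedOn_pderiv_supSphere (n j : ℕ) (i : Fin n) :
    Module.End.IsBoundedOn {Q | ∃ m ≤ j, Q.IsHomogeneous m} (supSphere n) (√2 * j)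
      (pderiv (R := ℝ) i).toLinearMap := by
  refine ⟨fun Q ⟨m, hmj, hQ⟩ => ⟨m - 1, by omega, hQ.pderiv⟩, fun Q ⟨m, hmj, hQ⟩ => ?_⟩
  refine (hQ.supSphere_pderiv_le i).trans ?_
  have := supSphere_nonneg Q
  gcongr

lemma supSphere_pderivMulti_le {n j : ℕ} {Q : MvPolynomial (Fin n) ℝ} (hQ : Q.IsHomogeneous j)
    (α : Fin n → ℕ) : supSphere n (pderivMulti n α Q) ≤ (√2 * j) ^ (∑ i, α i) * supSphere n Q := by
  have h := Module.End.IsBoundedOn.list_prod (List.finRange n)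
    (fun i => by positivity) fun i => (isBoundedOn_pderiv_supSphere n j i).pow (by positivity) (α i)
  rw [← Fin.prod_univ_def, Finset.prod_pow_eq_pow_sum] at h
  exact h.2 Q ⟨j, le_rfl, hQ⟩

lemma sqrt_two_mul_pow_le {n j a : ℕ} (hn : 2 ≤ n) (ha : 1 ≤ a) :
    (√2 * j) ^ a ≤ Real.exp ((n : ℝ) / 4 - 1 / 2) * √n * (2 : ℝ) ^ ((a : ℝ) / 2) *
      (j : ℝ) ^ ((a : ℝ) + (n : ℝ) / 2 - 1) := by
  have hn' : (2 : ℝ) ≤ n := by exact_mod_cast hn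
  rcases Nat.eq_zero_or_pos j with rfl | hj
  · rw [Nat.cast_zero, mul_zero, zero_pow (by omega)]
    positivity
  have hj' : (1 : ℝ) ≤ j := by exact_mod_cast hj
  calc (√2 * j) ^ a = 1 * 1 * (2 : ℝ) ^ ((a : ℝ) / 2) * (j : ℝ) ^ (a : ℝ) := by
        rw [mul_pow, Real.sqrt_eq_rpow, ← Real.rpow_natCast, ← Real.rpow_mul zero_le_two,
          Real.rpow_natCast]
        ring_nf
    _ ≤ _ := by
        gcongr
        · exact Real.one_le_exp (by linarith)
        · exact Real.one_le_sqrt.mpr (by linarith)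
        · linarith

theorem stmt9_general (n j : ℕ) (hn : 2 ≤ n) (Q : MvPolynomial (Fin n) ℝ)
    (hhom : Q.IsHomogeneous j)
    (α : Fin n → ℕ) (hα : α ≠ 0) :
    supSphere n (pderivMulti n α Q) ≤
      Real.exp ((n : ℝ) / 4 - 1 / 2) * Real.sqrt n * (2 : ℝ) ^ (((∑ i, α i : ℕ) : ℝ) / 2) *
        (j : ℝ) ^ (((∑ i, α i : ℕ) : ℝ) + (n : ℝ) / 2 - 1) * supSphere n Q := by
  have horder : 1 ≤ ∑ i, α i := Nat.one_le_iff_ne_zero.mpr fun h =>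
    hα (funext fun i => Finset.sum_eq_zero_iff.mp h i (Finset.mem_univ i))
  exact (supSphere_pderivMulti_le hhom α).trans
    (mul_le_mul_of_nonneg_right (sqrt_two_mul_pow_le hn horder) (supSphere_nonneg Q))

/-- For every solid harmonic `Q_j` of degree `j` on `ℝ^n` (`n ≥ 2`) and
every nonzero multi-index `α`,
`‖∂^α Q_j‖_{L^∞(S^{n-1})} ≤ e^{n/4−1/2}·√n·2^{|α|/2}·j^{|α|+n/2−1}·‖Q_j‖_{L^∞(S^{n-1})}`. -/
theorem stmt9 (n j : ℕ) (hn : 2 ≤ n) (Q : MvPolynomial (Fin n) ℝ)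
    (hhom : Q.IsHomogeneous j)
    (hharm : (∑ i : Fin n, pderiv i (pderiv i Q)) = 0)
    (α : Fin n → ℕ) (hα : α ≠ 0) :
    supSphere n (pderivMulti n α Q) ≤
      Real.exp ((n : ℝ) / 4 - 1 / 2) * Real.sqrt n * (2 : ℝ) ^ (((∑ i, α i : ℕ) : ℝ) / 2) *
        (j : ℝ) ^ (((∑ i, α i : ℕ) : ℝ) + (n : ℝ) / 2 - 1) * supSphere n Q :=
  stmt9_general n j hn Q hhom α hα
end

section
/- Let M_p be a weight sequence satisfying (M.1)* (i.e., M_p/p! is logarithmically convex) and (M.2): M_{p+q} ≤ A·H^{p+q}·M_p·M_q. Then there exist constants L, ℓ > 0 such that inf_{y>0} (M*(1/y) + t·y) ≤ M(ℓt) + log L for all t > 0, where M is the associated function of M_p and M* is the associated function of M_p/p!. -/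
open Real Nat

theorem assocExp_le_ofReal {M : ℕ → ℝ} {t x : ℝ} (h : ∀ p, t ^ p / M p ≤ x) :
    assocExp M t ≤ ENNReal.ofReal x :=
  iSup_le fun p => ENNReal.ofReal_le_ofReal (h p)

theorem ofReal_pow_div_le_assocExp (M : ℕ → ℝ) (t : ℝ) (p : ℕ) :
    ENNReal.ofReal (t ^ p / M p) ≤ assocExp M t :=
  le_iSup (fun p => ENNReal.ofReal (t ^ p / M p)) p

section LogConvex

variable {c : ℕ → ℝ} {s : ℝ} {n : ℕ}

theorem monotone_succ_div_of_sq_le (hc : ∀ p, 0 < c p)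
    (h : ∀ p, c (p + 1) ^ 2 ≤ c p * c (p + 2)) : Monotone fun p => c (p + 1) / c p := by
  refine monotone_nat_of_le_succ fun p => ?_
  rw [div_le_div_iff₀ (hc p) (hc (p + 1)), ← sq, mul_comm]
  exact h p

theorem pow_div_le_of_forall_mul_le_succ (hc : ∀ p, 0 < c p) (hs : 0 ≤ s)
    (h : ∀ q, n ≤ q → s * c q ≤ c (q + 1)) {q : ℕ} (hq : n ≤ q) :
    s ^ q / c q ≤ s ^ n / c n := by
  induction q, hq using Nat.le_induction with
  | base => rfl
  | succ q hnq ih =>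
    refine le_trans ?_ ih
    rw [div_le_div_iff₀ (hc _) (hc _), pow_succ, mul_assoc]
    exact mul_le_mul_of_nonneg_left (h q hnq) (pow_nonneg hs q)

theorem exists_forall_pow_div_le (hc : ∀ p, 0 < c p) (hs : 0 ≤ s)
    (h : ∀ q, n ≤ q → s * c q ≤ c (q + 1)) : ∃ N, ∀ q, s ^ q / c q ≤ s ^ N / c N := by
  obtain ⟨N, -, hN⟩ :=
    (Finset.range (n + 1)).exists_max_image (fun q => s ^ q / c q) ⟨n, by simp⟩
  refine ⟨N, fun q => ?_⟩
  rcases le_or_gt q n with hqn | hnq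
  · exact hN q (Finset.mem_range_succ_iff.2 hqn)
  · exact (pow_div_le_of_forall_mul_le_succ hc hs h hnq.le).trans (hN n (by simp))

end LogConvex

theorem div_pow_mul_factorial_le {t : ℝ} (ht : 0 ≤ t) {q n : ℕ} (hq : q ≤ n) :
    (t / (n + 1)) ^ q * q ! ≤ t ^ q := by
  have hfac : (q ! : ℝ) ≤ ((n : ℝ) + 1) ^ q := by
    calc (q ! : ℝ) ≤ (q : ℝ) ^ q := mod_cast Nat.factorial_le_pow q
      _ ≤ ((n : ℝ) + 1) ^ q := by gcongr; exact_mod_cast hq.trans n.le_succ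
  rw [div_pow, div_mul_eq_mul_div, div_le_iff₀ (by positivity)]
  exact mul_le_mul_of_nonneg_left hfac (pow_nonneg ht q)

section WeightSequence

variable {M : ℕ → ℝ} {A H t : ℝ}

theorem monotone_succ_div_of_M1star (hMpos : ∀ p, 0 < M p)
    (hM1star : ∀ p : ℕ, 1 ≤ p →
      (M p / p !) ^ 2 ≤ (M (p - 1) / (p - 1)!) * (M (p + 1) / (p + 1)!)) :
    Monotone fun p : ℕ => M (p + 1) / ((p + 1) * M p) := by
  have hc := monotone_succ_div_of_sq_le (c := fun p => M p / p !)
    (fun p => div_pos (hMpos p) (by positivity))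
    fun p => by simpa only [Nat.add_sub_cancel] using hM1star (p + 1) le_add_self
  convert hc using 2 with p
  have := hMpos p
  rw [Nat.factorial_succ]
  push_cast
  field_simp

theorem exists_forall_mul_le_succ (hMpos : ∀ p, 0 < M p)
    (hρ : Monotone fun p : ℕ => M (p + 1) / ((p + 1) * M p)) (t : ℝ) :
    ∃ n : ℕ, ∀ q, n ≤ q → t * M q ≤ M (q + 1) := by
  have hρ₀ : 0 < M 1 / M 0 := div_pos (hMpos 1) (hMpos 0)
  obtain ⟨n, hn⟩ := exists_nat_ge (t / (M 1 / M 0))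
  refine ⟨n, fun q hq => ?_⟩
  have hρq : M 1 / M 0 ≤ M (q + 1) / ((q + 1) * M q) := by simpa using hρ (zero_le q)
  have hratio : (q + 1) * (M (q + 1) / ((q + 1) * M q)) = M (q + 1) / M q := by
    have := hMpos q
    field_simp
  rw [← le_div_iff₀ (hMpos q), ← hratio]
  rw [div_le_iff₀ hρ₀] at hn
  calc t ≤ n * (M 1 / M 0) := hn
    _ ≤ (q + 1) * (M (q + 1) / ((q + 1) * M q)) :=
      mul_le_mul (mod_cast hq.trans q.le_succ) hρq hρ₀.le (by positivity)

theorem div_mul_div_factorial_le_succ (hMpos : ∀ p, 0 < M p)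
    (hρ : Monotone fun p : ℕ => M (p + 1) / ((p + 1) * M p)) {N q : ℕ}
    (hN : t * M N ≤ M (N + 1)) (hq : N ≤ q) :
    t / (N + 1) * (M q / q !) ≤ M (q + 1) / (q + 1)! := by
  have hρN : t / (N + 1) ≤ M (N + 1) / ((N + 1) * M N) := by
    rw [div_le_div_iff₀ (by positivity) (by have := hMpos N; positivity)]
    linarith [mul_le_mul_of_nonneg_left hN (by positivity : (0 : ℝ) ≤ N + 1)]
  have hsucc : M (q + 1) / (q + 1)! = M (q + 1) / ((q + 1) * M q) * (M q / q !) := by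
    have := hMpos q
    rw [Nat.factorial_succ]
    push_cast
    field_simp
  rw [hsucc]
  exact mul_le_mul_of_nonneg_right (hρN.trans (hρ hq)) (div_nonneg (hMpos q).le (by positivity))

theorem div_pow_div_factorial_le (hMpos : ∀ p, 0 < M p)
    (hρ : Monotone fun p : ℕ => M (p + 1) / ((p + 1) * M p)) (ht : 0 < t) {N : ℕ}
    (hN : ∀ q, t ^ q / M q ≤ t ^ N / M N) (q : ℕ) :
    (t / (N + 1)) ^ q / (M q / q !) ≤ t ^ N / M N := by
  have hsucc : t * M N ≤ M (N + 1) := by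
    have h := hN (N + 1)
    rw [div_le_div_iff₀ (hMpos _) (hMpos _), pow_succ, mul_assoc] at h
    exact le_of_mul_le_mul_left h (pow_pos ht N)
  have hle : ∀ q ≤ N, (t / (N + 1)) ^ q / (M q / q !) ≤ t ^ N / M N := fun q hq => by
    rw [div_div_eq_mul_div]
    exact (div_le_div_of_nonneg_right (div_pow_mul_factorial_le ht.le hq) (hMpos q).le).trans
      (hN q)
  rcases le_total q N with hq | hq
  · exact hle q hq
  · refine (pow_div_le_of_forall_mul_le_succ (c := fun p => M p / p !)
      (fun p => div_pos (hMpos p) (by positivity)) (by positivity)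
      (fun q hq => div_mul_div_factorial_le_succ hMpos hρ hsucc hq) hq).trans (hle N le_rfl)

theorem sq_pow_div_le (hMpos : ∀ p, 0 < M p)
    (hM2 : ∀ p q : ℕ, M (p + q) ≤ A * H ^ (p + q) * M p * M q) (n : ℕ) :
    (t ^ n / M n) ^ 2 ≤ A * ((H * t) ^ (2 * n) / M (2 * n)) := by
  have := hMpos n
  rw [div_pow, mul_div_assoc', div_le_div_iff₀ (by positivity) (hMpos _), two_mul]
  calc (t ^ n) ^ 2 * M (n + n) ≤ (t ^ n) ^ 2 * (A * H ^ (n + n) * M n * M n) :=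
        mul_le_mul_of_nonneg_left (hM2 n n) (by positivity)
    _ = A * (H * t) ^ (n + n) * M n ^ 2 := by ring

theorem exp_mul_pow_div_le (hMpos : ∀ p, 0 < M p)
    (hM2 : ∀ p q : ℕ, M (p + q) ≤ A * H ^ (p + q) * M p * M q) {n : ℕ}
    (hn : 1 ≤ t ^ n / M n) :
    exp (n + 1) * (t ^ n / M n) ≤ exp 1 * A * ((exp 1 * H * t) ^ (2 * n) / M (2 * n)) := by
  set x := t ^ n / M n
  have hexp : exp n = exp 1 ^ n := (exp_one_pow n).symm
  calc exp (n + 1) * x = exp 1 * (exp n * x) := by rw [exp_add]; ring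
    _ ≤ exp 1 * (exp n * x) ^ 2 := by
      gcongr
      exact le_self_pow₀ (one_le_mul_of_one_le_of_one_le (one_le_exp n.cast_nonneg) hn)
        two_ne_zero
    _ = exp 1 * exp 1 ^ (2 * n) * x ^ 2 := by rw [hexp]; ring
    _ ≤ exp 1 * exp 1 ^ (2 * n) * (A * ((H * t) ^ (2 * n) / M (2 * n))) := by
      gcongr
      exact sq_pow_div_le hMpos hM2 n
    _ = exp 1 * A * ((exp 1 * H * t) ^ (2 * n) / M (2 * n)) := by ring

end WeightSequence

/-- Petzsche–Vogt: Let `M_p` satisfy (M.1)* (`M_p/p!` is logarithmically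
convex) and (M.2) (`M_{p+q} ≤ A·H^{p+q}·M_p·M_q`).  Then there are `L, ℓ > 0` such that
`inf_{y>0} (M*(1/y) + t·y) ≤ M(ℓt) + log L` for all `t > 0` (written in exponential form:
`inf_{y>0} e^{M*(1/y)}·e^{ty} ≤ L·e^{M(ℓt)}`). -/
theorem stmt13 (M : ℕ → ℝ) (hMpos : ∀ p, 0 < M p) (hM0 : M 0 = 1)
    (hM1star : ∀ p : ℕ, 1 ≤ p →
      (M p / Nat.factorial p) ^ 2 ≤
        (M (p - 1) / Nat.factorial (p - 1)) * (M (p + 1) / Nat.factorial (p + 1)))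
    (A H : ℝ) (hA : 1 ≤ A) (hH : 1 ≤ H)
    (hM2 : ∀ p q : ℕ, M (p + q) ≤ A * H ^ (p + q) * M p * M q) :
    ∃ L ℓ : ℝ, 0 < L ∧ 0 < ℓ ∧ ∀ t : ℝ, 0 < t →
      (⨅ (y : ℝ) (_ : 0 < y),
          assocExp (fun p => M p / Nat.factorial p) (1 / y) * ENNReal.ofReal (Real.exp (t * y)))
        ≤ ENNReal.ofReal L * assocExp M (ℓ * t) := by
  have hρ := monotone_succ_div_of_M1star hMpos hM1star
  have hA₀ : 0 < A := by linarith
  have hH₀ : 0 < H := by linarith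
  refine ⟨exp 1 * A, exp 1 * H, by positivity, by positivity, fun t ht => ?_⟩
  obtain ⟨n₀, hn₀⟩ := exists_forall_mul_le_succ hMpos hρ t
  obtain ⟨N, hN⟩ := exists_forall_pow_div_le hMpos ht.le hn₀
  have hN1 : 1 ≤ t ^ N / M N := by simpa [hM0] using hN 0
  have hy : 0 < ((N : ℝ) + 1) / t := by positivity
  calc _ ≤ assocExp (fun p => M p / p !) (1 / ((N + 1) / t)) *
          ENNReal.ofReal (exp (t * ((N + 1) / t))) := iInf₂_le _ hy
    _ ≤ ENNReal.ofReal (t ^ N / M N) * ENNReal.ofReal (exp (N + 1)) := by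
      rw [one_div_div, mul_div_cancel₀ _ ht.ne']
      gcongr
      exact assocExp_le_ofReal (div_pow_div_factorial_le hMpos hρ ht hN)
    _ = ENNReal.ofReal (exp (N + 1) * (t ^ N / M N)) := by
      rw [mul_comm, ENNReal.ofReal_mul (exp_pos _).le]
    _ ≤ ENNReal.ofReal (exp 1 * A * ((exp 1 * H * t) ^ (2 * N) / M (2 * N))) :=
      ENNReal.ofReal_le_ofReal (exp_mul_pow_div_le hMpos hM2 hN1)
    _ ≤ ENNReal.ofReal (exp 1 * A) * assocExp M (exp 1 * H * t) := by
      rw [ENNReal.ofReal_mul (by positivity)]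
      gcongr
      exact ofReal_pow_div_le_assocExp M _ _
end

section
/- Let M_p be a weight sequence satisfying (M.1) and (M.2)' with associated function M and M*(t) = sup_p log(p!t^p/M_p). If f_j ∈ H_j(S^{n-1}) satisfy ‖f_j‖_{L^∞(S^{n-1})} ≤ C·e^{M(hj)} for all j and some C, h > 0, then the harmonic function U(rω) = ∑_{j≥0} r^j f_j(ω) on the unit ball satisfies |U(x)| ≤ C'·exp(M*(H³h/(1−|x|))) for all x in the unit ball, for some constant C' depending on C, h, A, H. -/
open MvPolynomial

/-- `φ` is a spherical harmonic of degree `j` on `S^{n-1}`: the restriction of a harmonic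
homogeneous polynomial of degree `j`. -/
def IsSphHarm (n j : ℕ) (φ : C(Metric.sphere (0 : EuclideanSpace ℝ (Fin n)) 1, ℝ)) : Prop :=
  ∃ Q : MvPolynomial (Fin n) ℝ, Q.IsHomogeneous j ∧
    (∑ i : Fin n, pderiv i (pderiv i Q)) = 0 ∧
    ∀ x : Metric.sphere (0 : EuclideanSpace ℝ (Fin n)) 1,
      φ x = MvPolynomial.eval (fun i => (x : EuclideanSpace ℝ (Fin n)) i) Q

/-!
Expanding `exp (H²t/s) ≥ (H²t/s)^(p+2)/(p+2)!` and applying (M.2)' twice, `M_{p+2} ≤ A²H^{2p+1}M_p`,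
gives `(1 + t²) e^{M(t)} ≤ (1 + A²/H³) e^{H²t/s} e^{M*(s)}`. For `t = hj` and `s = H³h/(1-r)` the
factor `r^j e^{H²hj/s} = r^j e^{j(1-r)/H}` is at most `1` because `r ≤ e^{-(1-r)}` and `H ≥ 1`, so the
`j`-th term of the series is at most `C (1 + A²/H³) e^{M*(s)} / (1 + h²j²)`, which is summable in `j`
uniformly in `r`.
-/

open Real

theorem le_sq_mul_pow_of_succ_le {M : ℕ → ℝ} {A H : ℝ} (hA : 0 ≤ A)
    (hH : 0 ≤ H) (hM2 : ∀ p : ℕ, M (p + 1) ≤ A * H ^ p * M p) (p : ℕ) :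
    M (p + 2) ≤ A ^ 2 * H ^ (2 * p + 1) * M p := by
  calc M (p + 2) ≤ A * H ^ (p + 1) * M (p + 1) := hM2 (p + 1)
    _ ≤ A * H ^ (p + 1) * (A * H ^ p * M p) := by gcongr; exact hM2 p
    _ = A ^ 2 * H ^ (2 * p + 1) * M p := by ring

theorem pow_div_le_exp_mul_pow_div {t s m : ℝ} (ht : 0 ≤ t) (hs : 0 < s) (hm : 0 ≤ m) (p : ℕ) :
    t ^ p / m ≤ exp (t / s) * (s ^ p / (m / p.factorial)) := by
  have hexp : (t / s) ^ p ≤ exp (t / s) * p.factorial := by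
    have := pow_div_factorial_le_exp (t / s) (by positivity) p
    rwa [div_le_iff₀ (by positivity)] at this
  calc t ^ p / m = (t / s) ^ p * s ^ p / m := by rw [div_pow, div_mul_cancel₀ _ (by positivity)]
    _ ≤ exp (t / s) * p.factorial * s ^ p / m := by gcongr
    _ = exp (t / s) * (s ^ p / (m / p.factorial)) := by rw [div_div_eq_mul_div]; ring

theorem sq_mul_pow_div_le {t s A H m m₂ : ℝ} (ht : 0 ≤ t) (hs : 0 < s) (hA : A ≠ 0) (hH : 0 < H)
    (hm : 0 < m) (hm₂ : 0 < m₂) (p : ℕ) (hmm₂ : m₂ ≤ A ^ 2 * H ^ (2 * p + 1) * m) :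
    t ^ 2 * (t ^ p / m) ≤
      A ^ 2 / H ^ 3 * exp (H ^ 2 * t / s) * (s ^ (p + 2) / (m₂ / (p + 2).factorial)) := by
  calc t ^ 2 * (t ^ p / m)
      = A ^ 2 / H ^ 3 * ((H ^ 2 * t) ^ (p + 2) / (A ^ 2 * H ^ (2 * p + 1) * m)) := by
        field_simp; ring
    _ ≤ A ^ 2 / H ^ 3 * ((H ^ 2 * t) ^ (p + 2) / m₂) := by gcongr
    _ ≤ A ^ 2 / H ^ 3 * (exp (H ^ 2 * t / s) * (s ^ (p + 2) / (m₂ / (p + 2).factorial))) := by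
        gcongr; exact pow_div_le_exp_mul_pow_div (by positivity) hs hm₂.le _
    _ = _ := by ring

theorem assocExp_le_mul_assocExp_div_factorial {M : ℕ → ℝ} {A H t s : ℝ}
    (hMpos : ∀ p, 0 < M p) (hA : 0 < A) (hH : 1 ≤ H) (hM2 : ∀ p : ℕ, M (p + 1) ≤ A * H ^ p * M p)
    (ht : 0 ≤ t) (hs : 0 < s) :
    assocExp M t ≤ ENNReal.ofReal ((1 + A ^ 2 / H ^ 3) * exp (H ^ 2 * t / s) / (1 + t ^ 2)) *
      assocExp (fun p => M p / p.factorial) s := by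
  have hH₀ : 0 < H := by linarith
  set E := assocExp (fun p => M p / p.factorial) s
  set y : ℕ → ℝ := fun q => s ^ q / (M q / q.factorial)
  have hy : ∀ q, 0 ≤ y q := fun q => div_nonneg (by positivity) (div_nonneg (hMpos q).le (by positivity))
  have hyE : ∀ q, ENNReal.ofReal (y q) ≤ E := fun q => le_iSup (fun q => ENNReal.ofReal (y q)) q
  refine iSup_le fun p => ?_
  set a := exp (t / s) / (1 + t ^ 2)
  set b := A ^ 2 / H ^ 3 * exp (H ^ 2 * t / s) / (1 + t ^ 2)
  have hsplit : t ^ p / M p ≤ a * y p + b * y (p + 2) := by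
    have h₀ : t ^ p / M p ≤ exp (t / s) * y p := pow_div_le_exp_mul_pow_div ht hs (hMpos p).le p
    have h₂ : t ^ 2 * (t ^ p / M p) ≤ A ^ 2 / H ^ 3 * exp (H ^ 2 * t / s) * y (p + 2) :=
      sq_mul_pow_div_le ht hs hA.ne' hH₀ (hMpos p) (hMpos (p + 2)) p
        (le_sq_mul_pow_of_succ_le hA.le hH₀.le hM2 p)
    have hcomb : a * y p + b * y (p + 2) =
        (exp (t / s) * y p + A ^ 2 / H ^ 3 * exp (H ^ 2 * t / s) * y (p + 2)) / (1 + t ^ 2) := by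
      simp only [a, b]; ring
    rw [hcomb, le_div_iff₀ (by positivity)]
    linarith
  have hab : a + b ≤ (1 + A ^ 2 / H ^ 3) * exp (H ^ 2 * t / s) / (1 + t ^ 2) := by
    have : t / s ≤ H ^ 2 * t / s := by gcongr; nlinarith [one_le_pow₀ (n := 2) hH]
    rw [← add_div]; gcongr; nlinarith [exp_le_exp.mpr this]
  calc ENNReal.ofReal (t ^ p / M p) ≤ ENNReal.ofReal (a * y p + b * y (p + 2)) := by gcongr
    _ = ENNReal.ofReal a * ENNReal.ofReal (y p) + ENNReal.ofReal b * ENNReal.ofReal (y (p + 2)) := by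
      rw [ENNReal.ofReal_add (mul_nonneg (by positivity) (hy p)) (mul_nonneg (by positivity) (hy (p + 2))),
        ENNReal.ofReal_mul (by positivity), ENNReal.ofReal_mul (by positivity)]
    _ ≤ ENNReal.ofReal a * E + ENNReal.ofReal b * E := by gcongr <;> apply hyE
    _ = ENNReal.ofReal (a + b) * E := by
      rw [← add_mul, ENNReal.ofReal_add (by positivity) (by positivity)]
    _ ≤ _ := by gcongr

theorem pow_mul_exp_le_one {r H : ℝ} (hr₀ : 0 ≤ r) (hr₁ : r ≤ 1) (hH : 1 ≤ H) (j : ℕ) :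
    r ^ j * exp (j * (1 - r) / H) ≤ 1 := by
  have hr : r ≤ exp (-(1 - r)) := by linarith [add_one_le_exp (-(1 - r))]
  calc r ^ j * exp (j * (1 - r) / H) ≤ exp (-(1 - r)) ^ j * exp (j * (1 - r) / H) := by gcongr
    _ = exp (j * (1 - r) * (1 / H - 1)) := by rw [← exp_nat_mul, ← exp_add]; ring_nf
    _ ≤ 1 := by
      rw [exp_le_one_iff]
      refine mul_nonpos_of_nonneg_of_nonpos (by nlinarith) ?_
      linarith [(div_le_one (by linarith : (0 : ℝ) < H)).mpr hH]

theorem ofReal_pow_mul_le_of_le_assocExp {M : ℕ → ℝ} {A H h C r a : ℝ}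
    (hMpos : ∀ p, 0 < M p) (hA : 0 < A) (hH : 1 ≤ H) (hM2 : ∀ p : ℕ, M (p + 1) ≤ A * H ^ p * M p)
    (hh : 0 < h) (hr₀ : 0 ≤ r) (hr₁ : r < 1) (j : ℕ)
    (ha : ENNReal.ofReal a ≤ ENNReal.ofReal C * assocExp M (h * j)) :
    ENNReal.ofReal (r ^ j * a) ≤
      ENNReal.ofReal C * assocExp (fun p => M p / p.factorial) (H ^ 3 * h / (1 - r)) *
        ENNReal.ofReal ((1 + A ^ 2 / H ^ 3) / (1 + (h * j) ^ 2)) := by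
  set s := H ^ 3 * h / (1 - r)
  have hs : 0 < s := div_pos (by positivity) (by linarith)
  set E := assocExp (fun p => M p / p.factorial) s
  set K := 1 + A ^ 2 / H ^ 3
  have hdamp : r ^ j * exp (H ^ 2 * (h * j) / s) ≤ 1 := by
    convert pow_mul_exp_le_one hr₀ hr₁.le hH j using 3
    simp only [s]; field_simp
  have hE := assocExp_le_mul_assocExp_div_factorial hMpos hA hH hM2 (by positivity : 0 ≤ h * j) hs
  calc ENNReal.ofReal (r ^ j * a) = ENNReal.ofReal (r ^ j) * ENNReal.ofReal a :=
        ENNReal.ofReal_mul (by positivity)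
    _ ≤ ENNReal.ofReal (r ^ j) * (ENNReal.ofReal C *
          (ENNReal.ofReal (K * exp (H ^ 2 * (h * j) / s) / (1 + (h * j) ^ 2)) * E)) := by
        gcongr; exact ha.trans (mul_le_mul_right hE _)
    _ = ENNReal.ofReal C * E * (ENNReal.ofReal (r ^ j) *
          ENNReal.ofReal (K * exp (H ^ 2 * (h * j) / s) / (1 + (h * j) ^ 2))) := by ring
    _ = ENNReal.ofReal C * E *
          ENNReal.ofReal (r ^ j * exp (H ^ 2 * (h * j) / s) * (K / (1 + (h * j) ^ 2))) := by
        rw [← ENNReal.ofReal_mul (by positivity)]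
        congr 2
        ring
    _ ≤ ENNReal.ofReal C * E * ENNReal.ofReal (K / (1 + (h * j) ^ 2)) := by
        gcongr ENNReal.ofReal C * E * ENNReal.ofReal ?_
        exact mul_le_of_le_one_left (by positivity) hdamp

theorem summable_div_one_add_mul_sq (a : ℝ) {c : ℝ} (hc : 0 < c) :
    Summable fun j : ℕ => a / (1 + (c * j) ^ 2) := by
  have hsq : Summable fun j : ℕ => 1 / c ^ 2 * (1 / ((j + 1 : ℕ) : ℝ) ^ 2) :=
    ((summable_nat_add_iff 1).mpr (Real.summable_one_div_nat_pow.mpr one_lt_two)).mul_left _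
  have hone : Summable fun j : ℕ => 1 / (1 + (c * j) ^ 2) := by
    refine (summable_nat_add_iff 1).mp (hsq.of_nonneg_of_le (fun j => by positivity) fun j => ?_)
    rw [one_div_mul_one_div, ← mul_pow]
    exact one_div_le_one_div_of_le (by positivity) (by linarith)
  simpa only [mul_one_div] using hone.mul_left a

theorem stmt14_general (n : ℕ)
    (M : ℕ → ℝ) (hMpos : ∀ p, 0 < M p)
    (A H : ℝ) (hA : 1 < A) (hH : 1 < H)
    (hM2 : ∀ p : ℕ, M (p + 1) ≤ A * H ^ p * M p)
    (fj : ℕ → C(Metric.sphere (0 : EuclideanSpace ℝ (Fin n)) 1, ℝ))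
    (C h : ℝ) (hC : 0 < C) (hh : 0 < h)
    (hb : ∀ j : ℕ, ENNReal.ofReal ‖fj j‖ ≤ ENNReal.ofReal C * assocExp M (h * j)) :
    ∃ C' : ℝ, 0 < C' ∧ ∀ (r : ℝ), 0 ≤ r → r < 1 →
      ∀ ω : Metric.sphere (0 : EuclideanSpace ℝ (Fin n)) 1,
        ENNReal.ofReal |∑' j : ℕ, r ^ j * fj j ω| ≤
          ENNReal.ofReal C' *
            assocExp (fun p => M p / Nat.factorial p) (H ^ 3 * h / (1 - r)) := by
  set g : ℕ → ℝ := fun j => (1 + A ^ 2 / H ^ 3) / (1 + (h * j) ^ 2)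
  have hg : Summable g := summable_div_one_add_mul_sq _ hh
  have hg₀ : ∀ j, 0 ≤ g j := fun j => by positivity
  refine ⟨C * ∑' j, g j, mul_pos hC (hg.tsum_pos hg₀ 0 (by positivity)), fun r hr₀ hr₁ ω => ?_⟩
  set E := assocExp (fun p => M p / p.factorial) (H ^ 3 * h / (1 - r))
  have hterm (j : ℕ) : ‖r ^ j * fj j ω‖ₑ ≤ ENNReal.ofReal C * E * ENNReal.ofReal (g j) := by
    refine le_trans ?_ (ofReal_pow_mul_le_of_le_assocExp hMpos (by linarith) hH.le hM2 hh hr₀ hr₁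
      j (hb j))
    rw [Real.enorm_eq_ofReal_abs, abs_mul, abs_of_nonneg (by positivity)]
    gcongr
    exact (fj j).norm_coe_le_norm ω
  calc ENNReal.ofReal |∑' j : ℕ, r ^ j * fj j ω| = ‖∑' j : ℕ, r ^ j * fj j ω‖ₑ :=
        (Real.enorm_eq_ofReal_abs _).symm
    _ ≤ ∑' j, ‖r ^ j * fj j ω‖ₑ := enorm_tsum_le_tsum_enorm
    _ ≤ ∑' j, ENNReal.ofReal C * E * ENNReal.ofReal (g j) := ENNReal.tsum_le_tsum hterm
    _ = ENNReal.ofReal (C * ∑' j, g j) * E := by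
        rw [ENNReal.tsum_mul_left, ← ENNReal.ofReal_tsum_of_nonneg hg₀ hg,
          ENNReal.ofReal_mul hC.le]
        ring

/-- Let `M_p` satisfy (M.1) and (M.2)'.  If `f_j ∈ H_j(S^{n-1})` satisfy
`‖f_j‖_∞ ≤ C·e^{M(hj)}`, then the harmonic function `U(rω) = ∑_j r^j f_j(ω)` on the unit
ball satisfies `|U(rω)| ≤ C'·exp(M*(H³h/(1−r)))` for some constant `C'`. -/
theorem stmt14 (n : ℕ) (hn : 2 ≤ n)
    (M : ℕ → ℝ) (hMpos : ∀ p, 0 < M p) (hM0 : M 0 = 1)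
    (hM1 : ∀ p : ℕ, 1 ≤ p → (M p) ^ 2 ≤ M (p - 1) * M (p + 1))
    (A H : ℝ) (hA : 1 < A) (hH : 1 < H)
    (hM2 : ∀ p : ℕ, M (p + 1) ≤ A * H ^ p * M p)
    (fj : ℕ → C(Metric.sphere (0 : EuclideanSpace ℝ (Fin n)) 1, ℝ))
    (hsh : ∀ j, IsSphHarm n j (fj j))
    (C h : ℝ) (hC : 0 < C) (hh : 0 < h)
    (hb : ∀ j : ℕ, ENNReal.ofReal ‖fj j‖ ≤ ENNReal.ofReal C * assocExp M (h * j)) :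
    ∃ C' : ℝ, 0 < C' ∧ ∀ (r : ℝ), 0 ≤ r → r < 1 →
      ∀ ω : Metric.sphere (0 : EuclideanSpace ℝ (Fin n)) 1,
        ENNReal.ofReal |∑' j : ℕ, r ^ j * fj j ω| ≤
          ENNReal.ofReal C' *
            assocExp (fun p => M p / Nat.factorial p) (H ^ 3 * h / (1 - r)) :=
  stmt14_general n M hMpos A H hA hH hM2 fj C h hC hh hb
end
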